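/- arXiv:2410.14714 — 5 statements merged into one kernel-verified Lean document; each statement's English description precedes it below -/
import Mathlib

section
/- The set of functions in Lip_0(T) with finite support is dense in Lip_0(T). -/
/-- An infinite, locally finite rooted tree in which every vertex other than
the root has degree greater than 1, together with the parent map. -/
structure LipTree (V : Type*) where
  root : V
  G : SimpleGraph V
  isTree : G.IsTree
  locFin : ∀ v : V, (G.neighborSet v).Finite
  infinite : Infinite V
  deg_gt : ∀ v : V, v ≠ root → 1 < (G.neighborSet v).ncard
  par : V → V
  par_root : par root = root
  adj_par : ∀ v : V, v ≠ root → G.Adj v (par v)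
  dist_par : ∀ v : V, v ≠ root → G.dist (par v) root + 1 = G.dist v root

namespace LipTree

variable {V : Type*}

/-- `|v|`, the distance from `v` to the root. -/
noncomputable def depth (T : LipTree V) (v : V) : ℕ := T.G.dist v T.root

/-- membership in the Lipschitz space `Lip(T)`. -/
def MemLip (T : LipTree V) (f : V → ℂ) : Prop :=
  ∃ C : ℝ, ∀ v : V, v ≠ T.root → ‖f v - f (T.par v)‖ ≤ C

/-- membership in the little Lipschitz space `Lip₀(T)`. -/
def MemLip0 (T : LipTree V) (f : V → ℂ) : Prop :=
  T.MemLip f ∧ ∀ ε : ℝ, 0 < ε → ∃ N : ℕ, ∀ v : V, v ≠ T.root → N ≤ T.depth v →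
    ‖f v - f (T.par v)‖ < ε

/-- the norm `‖f‖_Lip = max {|f(root)|, sup_{v ≠ root} |f(v) - f(v⁻)|}`. -/
noncomputable def normLip (T : LipTree V) (f : V → ℂ) : ℝ :=
  max ‖f T.root‖
    (sSup {r : ℝ | ∃ v : V, v ≠ T.root ∧ r = ‖f v - f (T.par v)‖})

/-- `φ` is a Lipschitz self-map of the tree. -/
noncomputable def LipschitzSelfMap (T : LipTree V) (φ : V → V) : Prop :=
  ∃ C : ℕ, ∀ v : V, v ≠ T.root → T.G.dist (φ v) (φ (T.par v)) ≤ C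

/-- the Lipschitz number `λ_φ`. -/
noncomputable def lipNum (T : LipTree V) (φ : V → V) : ℝ :=
  sSup {r : ℝ | ∃ v : V, v ≠ T.root ∧ r = (T.G.dist (φ v) (φ (T.par v)) : ℝ)}

/-- the composition operator `C_φ` maps `Lip₀` into itself and is bounded there. -/
def BoundedOnLip0 (T : LipTree V) (φ : V → V) : Prop :=
  (∀ f : V → ℂ, T.MemLip0 f → T.MemLip0 (f ∘ φ)) ∧
  ∃ C : ℝ, ∀ f : V → ℂ, T.MemLip0 f → T.normLip (f ∘ φ) ≤ C * T.normLip f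

/-- `u` belongs to the sector `S_v` determined by `v`. -/
def InSector (T : LipTree V) (v u : V) : Prop := ∃ k : ℕ, T.par^[k] u = v

end LipTree

/-!
Freeze `f` beyond depth `N` at the ancestor of depth `N` and damp it linearly to zero over the
next `M` generations. The result has finite support, agrees with `f` on the ball of radius `N`,
and outside that ball its differences are at most `max_{|w| ≤ N} |f w| / M`; since `f ∈ Lip₀`,
the differences of `f` itself are small there once `N` is large.
-/

namespace LipTree

variable {V : Type*} (T : LipTree V)

lemma depth_root : T.depth T.root = 0 := SimpleGraph.dist_self

lemma depth_eq_zero_iff (v : V) : T.depth v = 0 ↔ v = T.root :=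
  T.isTree.connected.dist_eq_zero_iff

lemma depth_par_add_one {v : V} (hv : v ≠ T.root) : T.depth (T.par v) + 1 = T.depth v :=
  T.dist_par v hv

lemma depth_par_eq_sub_one (v : V) : T.depth (T.par v) = T.depth v - 1 := by
  by_cases hv : v = T.root
  · simp [hv, T.par_root, T.depth_root]
  · have := T.depth_par_add_one hv
    omega

lemma depth_iterate_par (k : ℕ) (v : V) : T.depth (T.par^[k] v) = T.depth v - k := by
  induction k with
  | zero => rfl
  | succ k ih => rw [Function.iterate_succ_apply', depth_par_eq_sub_one, ih, Nat.sub_sub]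

lemma finite_setOf_depth_le (n : ℕ) : {v : V | T.depth v ≤ n}.Finite := by
  induction n with
  | zero =>
    refine (Set.finite_singleton T.root).subset fun v hv => ?_
    exact (T.depth_eq_zero_iff v).mp (Nat.le_zero.mp hv)
  | succ n ih =>
    refine (ih.union (ih.biUnion fun w _ => T.locFin w)).subset
      fun v (hv : T.depth v ≤ n + 1) => ?_
    by_cases h : T.depth v ≤ n
    · exact Or.inl h
    · have hvr : v ≠ T.root := fun hc => h (by simp [hc, T.depth_root])
      have := T.depth_par_add_one hvr
      exact Or.inr
        (Set.mem_biUnion (show T.depth (T.par v) ≤ n by omega) (T.adj_par v hvr).symm)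

lemma exists_norm_le_of_depth_le {E : Type*} [SeminormedAddGroup E] (f : V → E) (n : ℕ) :
    ∃ B, 0 ≤ B ∧ ∀ v, T.depth v ≤ n → ‖f v‖ ≤ B := by
  obtain ⟨B, hB⟩ := ((T.finite_setOf_depth_le n).image (‖f ·‖)).bddAbove
  exact ⟨max B 0, le_max_right _ _, fun v hv => (hB ⟨v, hv, rfl⟩).trans (le_max_left _ _)⟩

lemma memLip0_of_forall_depth_gt {g : V → ℂ} {R : ℕ} (hg : ∀ v, R < T.depth v → g v = 0) :
    T.MemLip0 g := by
  obtain ⟨B, hB0, hB⟩ := T.exists_norm_le_of_depth_le g R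
  have hbound (v : V) : ‖g v‖ ≤ B := by
    rcases le_or_gt (T.depth v) R with h | h
    · exact hB v h
    · simpa [hg v h] using hB0
  refine ⟨⟨2 * B, fun v _ => ?_⟩, fun ε hε => ⟨R + 2, fun v hv hdepth => ?_⟩⟩
  · linarith [norm_sub_le (g v) (g (T.par v)), hbound v, hbound (T.par v)]
  · have := T.depth_par_add_one hv
    rwa [hg v (by omega), hg _ (by omega), sub_self, norm_zero]

lemma normLip_le {f : V → ℂ} {c : ℝ} (hroot : ‖f T.root‖ ≤ c)
    (hdiff : ∀ v, v ≠ T.root → ‖f v - f (T.par v)‖ ≤ c) : T.normLip f ≤ c :=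
  max_le hroot <| Real.sSup_le (by rintro r ⟨v, hv, rfl⟩; exact hdiff v hv)
    ((norm_nonneg _).trans hroot)

noncomputable def proj (N : ℕ) (v : V) : V := T.par^[T.depth v - N] v

lemma depth_proj (N : ℕ) (v : V) : T.depth (T.proj N v) = min (T.depth v) N := by
  rw [proj, depth_iterate_par]
  omega

lemma proj_of_depth_le {N : ℕ} {v : V} (hv : T.depth v ≤ N) : T.proj N v = v := by
  rw [proj, Nat.sub_eq_zero_of_le hv, Function.iterate_zero_apply]

lemma proj_par {N : ℕ} {v : V} (hv : N < T.depth v) : T.proj N (T.par v) = T.proj N v := by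
  have hd := T.depth_par_eq_sub_one v
  rw [proj, proj, show T.depth v - N = (T.depth (T.par v) - N) + 1 by omega,
    Function.iterate_succ_apply]

end LipTree

noncomputable def ramp (a L x : ℝ) : ℝ := max (min ((a + L - x) / L) 1) 0

lemma ramp_of_le {a L x : ℝ} (hL : 0 < L) (hx : x ≤ a) : ramp a L x = 1 := by
  rw [ramp, min_eq_right ((one_le_div hL).mpr (by linarith)), max_eq_left zero_le_one]

lemma ramp_of_ge {a L x : ℝ} (hL : 0 ≤ L) (hx : a + L ≤ x) : ramp a L x = 0 :=
  max_eq_right <| (min_le_left _ _).trans (div_nonpos_of_nonpos_of_nonneg (by linarith) hL)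

lemma abs_ramp_sub_le (a : ℝ) {L : ℝ} (hL : 0 ≤ L) (x y : ℝ) :
    |ramp a L x - ramp a L y| ≤ |x - y| / L :=
  calc |ramp a L x - ramp a L y|
      ≤ |min ((a + L - x) / L) 1 - min ((a + L - y) / L) 1| := abs_max_sub_max_le_abs _ _ _
    _ ≤ |(a + L - x) / L - (a + L - y) / L| := by
        simpa using abs_min_sub_min_le_max ((a + L - x) / L) 1 ((a + L - y) / L) 1
    _ = |x - y| / L := by
        rw [← sub_div, abs_div, abs_of_nonneg hL, abs_sub_comm]
        ring_nf

namespace LipTree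

variable {V : Type*} (T : LipTree V)

noncomputable def cutoff (f : V → ℂ) (N : ℕ) (L : ℝ) (v : V) : ℂ :=
  f (T.proj N v) * (ramp N L (T.depth v) : ℂ)

variable {T} {f : V → ℂ} {N : ℕ} {L : ℝ}

lemma cutoff_of_depth_le (hL : 0 < L) {v : V} (hv : T.depth v ≤ N) :
    T.cutoff f N L v = f v := by
  rw [cutoff, T.proj_of_depth_le hv, ramp_of_le hL (by exact_mod_cast hv), Complex.ofReal_one,
    mul_one]

lemma cutoff_of_depth_ge (hL : 0 ≤ L) {v : V} (hv : N + L ≤ T.depth v) :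
    T.cutoff f N L v = 0 := by
  rw [cutoff, ramp_of_ge hL hv, Complex.ofReal_zero, mul_zero]

lemma norm_cutoff_sub_par_le (hL : 0 ≤ L) {B : ℝ} (hB : ∀ w, T.depth w ≤ N → ‖f w‖ ≤ B)
    {v : V} (hv : N < T.depth v) : ‖T.cutoff f N L v - T.cutoff f N L (T.par v)‖ ≤ B / L := by
  have hvr : v ≠ T.root := fun h => by simp [h, T.depth_root] at hv
  have hdepth : (T.depth v : ℝ) - T.depth (T.par v) = 1 := by
    rw [← T.depth_par_add_one hvr]; push_cast; ring
  have hfw : ‖f (T.proj N v)‖ ≤ B := hB _ (by rw [T.depth_proj]; exact min_le_right _ _)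
  have hramp : |ramp N L (T.depth v) - ramp N L (T.depth (T.par v))| ≤ 1 / L := by
    simpa [hdepth] using abs_ramp_sub_le (N : ℝ) hL (T.depth v) (T.depth (T.par v))
  calc ‖T.cutoff f N L v - T.cutoff f N L (T.par v)‖
      = ‖f (T.proj N v)‖ * |ramp N L (T.depth v) - ramp N L (T.depth (T.par v))| := by
        rw [cutoff, cutoff, T.proj_par hv, ← mul_sub, norm_mul, ← Complex.ofReal_sub,
          Complex.norm_real, Real.norm_eq_abs]
    _ ≤ B * (1 / L) := mul_le_mul hfw hramp (abs_nonneg _) ((norm_nonneg _).trans hfw)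
    _ = B / L := mul_one_div B L

lemma normLip_sub_cutoff_le (hL : 0 < L) {B δ : ℝ} (hB : ∀ w, T.depth w ≤ N → ‖f w‖ ≤ B)
    (hδ : 0 ≤ δ) (hf : ∀ v, v ≠ T.root → N < T.depth v → ‖f v - f (T.par v)‖ ≤ δ) :
    T.normLip (f - T.cutoff f N L) ≤ δ + B / L := by
  have hroot : T.depth T.root ≤ N := by simp [T.depth_root]
  have hbound : 0 ≤ δ + B / L :=
    add_nonneg hδ (div_nonneg ((norm_nonneg _).trans (hB T.root hroot)) hL.le)
  refine T.normLip_le (by simpa [cutoff_of_depth_le hL hroot]) fun v hv => ?_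
  rw [Pi.sub_apply, Pi.sub_apply, sub_sub_sub_comm]
  rcases le_or_gt (T.depth v) N with hvN | hvN
  · have := T.depth_par_add_one hv
    rwa [cutoff_of_depth_le hL hvN, cutoff_of_depth_le hL (by omega), sub_self, norm_zero]
  · exact (norm_sub_le _ _).trans
      (add_le_add (hf v hv hvN) (norm_cutoff_sub_par_le hL.le hB hvN))

end LipTree

/-- The set of functions in `Lip₀(T)` with finite support is dense in `Lip₀(T)`. -/
theorem lip0_finite_support_dense {V : Type*} (T : LipTree V)
    (f : V → ℂ) (hf : T.MemLip0 f) (ε : ℝ) (hε : 0 < ε) :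
    ∃ g : V → ℂ, T.MemLip0 g ∧ (Function.support g).Finite ∧ T.normLip (f - g) ≤ ε := by
  obtain ⟨-, hsmall⟩ := hf
  obtain ⟨N, hN⟩ := hsmall (ε / 2) (half_pos hε)
  obtain ⟨B, hB0, hB⟩ := T.exists_norm_le_of_depth_le f N
  obtain ⟨M, hM⟩ := exists_nat_gt (2 * B / ε)
  have hM0 : (0 : ℝ) < M := lt_of_le_of_lt (by positivity) hM
  have hBM : B / M ≤ ε / 2 := by
    rw [div_lt_iff₀ hε] at hM
    rw [div_le_iff₀ hM0]
    linarith
  have hvanish : ∀ v, N + M < T.depth v → T.cutoff f N M v = 0 := fun v hv =>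
    LipTree.cutoff_of_depth_ge hM0.le (by exact_mod_cast hv.le)
  refine ⟨T.cutoff f N M, T.memLip0_of_forall_depth_gt hvanish,
    (T.finite_setOf_depth_le (N + M)).subset fun v hv => not_lt.mp fun h => hv (hvanish v h), ?_⟩
  calc T.normLip (f - T.cutoff f N M)
      ≤ ε / 2 + B / M :=
        LipTree.normLip_sub_cutoff_le hM0 hB (half_pos hε).le fun v hv hvN => (hN v hv hvN.le).le
    _ ≤ ε := by linarith
end

section
/- Let φ : T → T be a nonconstant Lipschitz self-map with C_φ bounded on Lip_0(T). Then every eigenvalue μ of C_φ on Lip_0(T) satisfies |μ| ≤ λ_φ. -/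
/-!
An eigenfunction `f` with `f ∘ φ = μ • f` has Lipschitz seminorm `L = sup_{v ≠ o} |f(v) - f(v⁻)|`
satisfying `|μ| L ≤ λ_φ L`: since every edge of a tree joins a vertex to its parent, `f` changes by
at most `L` per edge, hence by at most `L · d(x, y)` between `x` and `y`, and `φ` moves the ends of
each parent edge at most `λ_φ` apart. If `L > 0` we divide by `L`. If `L = 0`, then `f` is a nonzero
constant, so `μ = 1`, and a nonconstant `φ` has `λ_φ ≥ 1`.
-/

namespace SimpleGraph

variable {V : Type*} {G : SimpleGraph V}

theorem Walk.dist_lt_of_mem_support {u r x : V} (p : G.Walk u r) (hp : p.length = G.dist u r)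
    (hx : x ∈ p.support) (hne : x ≠ u) : G.dist x r < G.dist u r := by
  obtain ⟨q, s, rfl⟩ := Walk.mem_support_iff_exists_append.mp hx
  have hq : q.length ≠ 0 := fun h => hne (Walk.eq_of_length_eq_zero h).symm
  have hs : G.dist x r ≤ s.length := dist_le s
  rw [Walk.length_append] at hp
  omega

theorem IsTree.eq_of_adj_of_dist_lt (hG : G.IsTree) {r x y z : V} (hy : G.Adj x y)
    (hz : G.Adj x z) (hyr : G.dist y r < G.dist x r) (hzr : G.dist z r < G.dist x r) :
    y = z := by
  obtain ⟨py, hpy, hpyl⟩ := hG.connected.exists_path_of_dist y r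
  obtain ⟨pz, hpz, hpzl⟩ := hG.connected.exists_path_of_dist z r
  have hxy : x ∉ py.support := fun hx => (py.dist_lt_of_mem_support hpyl hx hy.ne).not_gt hyr
  have hxz : x ∉ pz.support := fun hx => (pz.dist_lt_of_mem_support hpzl hx hz.ne).not_gt hzr
  have : Walk.cons hy py = Walk.cons hz pz :=
    (hG.existsUnique_path x r).unique (hpy.cons hxy) (hpz.cons hxz)
  simpa using congrArg (Walk.getVert · 1) this

theorem Walk.norm_sub_le_mul_length {E : Type*} [SeminormedAddCommGroup E] {f : V → E} {L : ℝ}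
    (hf : ∀ x y, G.Adj x y → ‖f x - f y‖ ≤ L) {x y : V} (p : G.Walk x y) :
    ‖f x - f y‖ ≤ L * p.length := by
  induction p with
  | nil => simp
  | @cons x z y h q ih =>
    calc ‖f x - f y‖ ≤ ‖f x - f z‖ + ‖f z - f y‖ := norm_sub_le_norm_sub_add_norm_sub _ _ _
      _ ≤ L + L * q.length := add_le_add (hf x z h) ih
      _ = L * (q.cons h).length := by rw [Walk.length_cons]; push_cast; ring

theorem Connected.norm_sub_le_mul_dist {E : Type*} [SeminormedAddCommGroup E] (hG : G.Connected)
    {f : V → E} {L : ℝ} (hf : ∀ x y, G.Adj x y → ‖f x - f y‖ ≤ L) (x y : V) :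
    ‖f x - f y‖ ≤ L * G.dist x y := by
  obtain ⟨p, hp⟩ := hG.exists_walk_length_eq_dist x y
  rw [← hp]
  exact p.norm_sub_le_mul_length hf

end SimpleGraph

namespace LipTree

variable {V : Type*} (T : LipTree V)

noncomputable def lipSeminorm (f : V → ℂ) : ℝ := ⨆ v : {v // v ≠ T.root}, ‖f v - f (T.par v)‖

theorem nonempty_ne_root : Nonempty {v // v ≠ T.root} :=
  have := T.infinite
  nonempty_subtype.mpr (exists_ne T.root)

theorem eq_par_or_eq_par_of_adj {x y : V} (h : T.G.Adj x y) : y = T.par x ∨ x = T.par y := by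
  have hdepth : ∀ {x y : V}, T.G.Adj x y → T.G.dist y T.root < T.G.dist x T.root →
      y = T.par x := by
    intro x y h hlt
    have hx : x ≠ T.root := by rintro rfl; simp at hlt
    have := T.dist_par x hx
    exact T.isTree.eq_of_adj_of_dist_lt h (T.adj_par x hx) hlt (by omega)
  have hne : T.G.dist x T.root ≠ T.G.dist y T.root := by
    simpa only [SimpleGraph.dist_comm] using T.isTree.dist_ne_of_adj T.root h
  rcases hne.lt_or_gt with hlt | hgt
  · exact Or.inr (hdepth h.symm hlt)
  · exact Or.inl (hdepth h hgt)

theorem apply_eq_apply_root_of_forall_eq_par {α : Sort*} (g : V → α)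
    (hg : ∀ v, v ≠ T.root → g v = g (T.par v)) (v : V) : g v = g T.root := by
  induction hn : T.G.dist v T.root generalizing v with
  | zero => rw [T.isTree.connected.dist_eq_zero_iff.mp hn]
  | succ n ih =>
    have hv : v ≠ T.root := by rintro rfl; simp at hn
    have := T.dist_par v hv
    rw [hg v hv]
    exact ih _ (by omega)

variable {T}

theorem lipSeminorm_nonneg (f : V → ℂ) : 0 ≤ T.lipSeminorm f :=
  Real.iSup_nonneg fun _ => norm_nonneg _

theorem norm_sub_par_le_lipSeminorm {f : V → ℂ} (hf : T.MemLip f) {v : V} (hv : v ≠ T.root) :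
    ‖f v - f (T.par v)‖ ≤ T.lipSeminorm f := by
  obtain ⟨C, hC⟩ := hf
  exact le_ciSup (f := fun v : {v // v ≠ T.root} => ‖f v - f (T.par v)‖)
    ⟨C, by rintro _ ⟨w, rfl⟩; exact hC w w.2⟩ ⟨v, hv⟩

theorem norm_sub_le_lipSeminorm_mul_dist {f : V → ℂ} (hf : T.MemLip f) (x y : V) :
    ‖f x - f y‖ ≤ T.lipSeminorm f * T.G.dist x y := by
  refine T.isTree.connected.norm_sub_le_mul_dist (fun x y h => ?_) x y
  have hpar : ∀ {v : V}, T.G.Adj v (T.par v) → v ≠ T.root := by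
    rintro v h rfl
    exact T.G.irrefl (T.par_root ▸ h)
  rcases T.eq_par_or_eq_par_of_adj h with rfl | rfl
  · exact norm_sub_par_le_lipSeminorm hf (hpar h)
  · rw [norm_sub_rev]
    exact norm_sub_par_le_lipSeminorm hf (hpar h.symm)

theorem lipSeminorm_smul (c : ℂ) (f : V → ℂ) : T.lipSeminorm (c • f) = ‖c‖ * T.lipSeminorm f := by
  simp only [lipSeminorm, Real.mul_iSup_of_nonneg (norm_nonneg c), Pi.smul_apply, ← smul_sub,
    norm_smul]

theorem dist_le_lipNum {φ : V → V} (hφ : T.LipschitzSelfMap φ) {v : V} (hv : v ≠ T.root) :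
    (T.G.dist (φ v) (φ (T.par v)) : ℝ) ≤ T.lipNum φ := by
  obtain ⟨C, hC⟩ := hφ
  refine le_csSup ⟨C, ?_⟩ ⟨v, hv, rfl⟩
  rintro _ ⟨w, hw, rfl⟩
  exact_mod_cast hC w hw

theorem lipSeminorm_comp_le {f : V → ℂ} (hf : T.MemLip f) {φ : V → V}
    (hφ : T.LipschitzSelfMap φ) : T.lipSeminorm (f ∘ φ) ≤ T.lipSeminorm f * T.lipNum φ := by
  have := T.nonempty_ne_root
  refine ciSup_le fun ⟨v, hv⟩ => ?_
  calc ‖f (φ v) - f (φ (T.par v))‖ ≤ T.lipSeminorm f * T.G.dist (φ v) (φ (T.par v)) :=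
        norm_sub_le_lipSeminorm_mul_dist hf _ _
    _ ≤ T.lipSeminorm f * T.lipNum φ :=
        mul_le_mul_of_nonneg_left (dist_le_lipNum hφ hv) (lipSeminorm_nonneg f)

theorem one_le_lipNum {φ : V → V} (hφ : T.LipschitzSelfMap φ)
    (hnc : ¬ ∃ w : V, ∀ v : V, φ v = w) : 1 ≤ T.lipNum φ := by
  obtain ⟨v, hv, hφv⟩ : ∃ v, v ≠ T.root ∧ φ v ≠ φ (T.par v) := by
    by_contra! h
    exact hnc ⟨φ T.root, T.apply_eq_apply_root_of_forall_eq_par φ h⟩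
  calc (1 : ℝ) ≤ T.G.dist (φ v) (φ (T.par v)) := by
        exact_mod_cast T.isTree.connected.pos_dist_of_ne hφv
    _ ≤ T.lipNum φ := dist_le_lipNum hφ hv

theorem eq_apply_root_of_lipSeminorm_eq_zero {f : V → ℂ} (hf : T.MemLip f)
    (h0 : T.lipSeminorm f = 0) (v : V) : f v = f T.root :=
  T.apply_eq_apply_root_of_forall_eq_par f (fun _ hv => sub_eq_zero.mp <| norm_le_zero_iff.mp <|
    h0 ▸ norm_sub_par_le_lipSeminorm hf hv) v

end LipTree

theorem point_spectrum_bound_general {V : Type*} (T : LipTree V) (φ : V → V)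
    (hφ : T.LipschitzSelfMap φ) (hnc : ¬ ∃ w : V, ∀ v : V, φ v = w) :
    ∀ μ : ℂ, ∀ f : V → ℂ, T.MemLip0 f → f ≠ 0 → f ∘ φ = μ • f →
      ‖μ‖ ≤ T.lipNum φ := by
  intro μ f hf hf0 heig
  have hcomp := LipTree.lipSeminorm_comp_le hf.1 hφ
  rw [heig, LipTree.lipSeminorm_smul] at hcomp
  rcases (LipTree.lipSeminorm_nonneg f).eq_or_lt with h0 | hpos
  · have hconst := LipTree.eq_apply_root_of_lipSeminorm_eq_zero hf.1 h0.symm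
    have hroot : f T.root ≠ 0 := fun h => hf0 (funext fun v => (hconst v).trans h)
    have hμ : μ = 1 := by
      have := congrFun heig T.root
      rw [Function.comp_apply, hconst, Pi.smul_apply, smul_eq_mul] at this
      exact (mul_eq_right₀ hroot).mp this.symm
    simpa [hμ] using LipTree.one_le_lipNum hφ hnc
  · exact le_of_mul_le_mul_right (by linarith) hpos

/-- For a nonconstant Lipschitz `φ` with `C_φ` bounded on `Lip₀`, every eigenvalue `μ`
of `C_φ` satisfies `|μ| ≤ λ_φ`. -/
theorem point_spectrum_bound {V : Type*} (T : LipTree V) (φ : V → V)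
    (hφ : T.LipschitzSelfMap φ) (hnc : ¬ ∃ w : V, ∀ v : V, φ v = w)
    (hbdd : T.BoundedOnLip0 φ) :
    ∀ μ : ℂ, ∀ f : V → ℂ, T.MemLip0 f → f ≠ 0 → f ∘ φ = μ • f →
      ‖μ‖ ≤ T.lipNum φ :=
  point_spectrum_bound_general T φ hφ hnc
end

section
/- Let T = ℕ₀ rooted at 0 with n ∼ m iff |n−m| = 1, and φ(m) = 2m + 1. Then every λ with 0 < |λ| < 2 is an eigenvalue of C_φ on Lip_0(T); an eigenfunction is f(m) = (m+1)^μ where 2^μ = λ. -/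
/-!
With `f m = (m + 1)^μ` the eigen-equation is multiplicativity of `cpow`:
`f (2m + 1) = (2(m + 1))^μ = 2^μ f m`. Since `‖2^μ‖ = 2^(Re μ)`, the bound `‖λ‖ < 2` means
`Re μ < 1`, and the mean value theorem applied to `t ↦ t^μ` on `[n + 1, n + 2]` gives
`‖f (n + 1) - f n‖ ≤ ‖μ‖ (n + 1)^(Re μ - 1) → 0`.
-/

/-- `Lip₀(ℕ₀)`: bounded successive differences tending to `0`. -/
def MemLip0N (f : ℕ → ℂ) : Prop :=
  (∃ C : ℝ, ∀ n : ℕ, ‖f (n + 1) - f n‖ ≤ C) ∧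
  Filter.Tendsto (fun n : ℕ => ‖f (n + 1) - f n‖) Filter.atTop (nhds 0)

open Complex Filter Set Topology

theorem memLip0N_of_tendsto {f : ℕ → ℂ}
    (hf : Tendsto (fun n : ℕ => ‖f (n + 1) - f n‖) atTop (𝓝 0)) : MemLip0N f := by
  obtain ⟨C, hC⟩ := hf.bddAbove_range
  exact ⟨⟨C, fun n => hC ⟨n, rfl⟩⟩, hf⟩

theorem Complex.norm_ofReal_add_one_cpow_sub_le {μ : ℂ} (hμ : μ.re ≤ 1) {x : ℝ} (hx : 0 < x) :
    ‖((x + 1 : ℝ) : ℂ) ^ μ - (x : ℂ) ^ μ‖ ≤ ‖μ‖ * x ^ (μ.re - 1) := by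
  have hderiv : ∀ t ∈ Icc x (x + 1),
      HasDerivWithinAt (fun t : ℝ => (t : ℂ) ^ μ) (μ * (t : ℂ) ^ (μ - 1)) (Icc x (x + 1)) t :=
    fun t ht => ((hasStrictDerivAt_cpow_const (ofReal_mem_slitPlane.2 (hx.trans_le ht.1))
      ).hasDerivAt.comp_ofReal).hasDerivWithinAt
  have hbound : ∀ t ∈ Ico x (x + 1), ‖μ * (t : ℂ) ^ (μ - 1)‖ ≤ ‖μ‖ * x ^ (μ.re - 1) := by
    intro t ht
    rw [norm_mul, norm_cpow_eq_rpow_re_of_pos (hx.trans_le ht.1), sub_re, one_re]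
    exact mul_le_mul_of_nonneg_left (Real.rpow_le_rpow_of_nonpos hx ht.1 (by linarith))
      (norm_nonneg μ)
  simpa using norm_image_sub_le_of_norm_deriv_le_segment' hderiv hbound (x + 1)
    (right_mem_Icc.2 (by linarith))

theorem memLip0N_natCast_add_one_cpow {μ : ℂ} (hμ : μ.re < 1) :
    MemLip0N fun m : ℕ => ((m + 1 : ℕ) : ℂ) ^ μ := by
  have hstep (n : ℕ) : ‖((n + 1 + 1 : ℕ) : ℂ) ^ μ - ((n + 1 : ℕ) : ℂ) ^ μ‖ ≤
      ‖μ‖ * ((n + 1 : ℕ) : ℝ) ^ (μ.re - 1) := by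
    exact_mod_cast norm_ofReal_add_one_cpow_sub_le hμ.le (x := ((n + 1 : ℕ) : ℝ)) (by positivity)
  have hmajor : Tendsto (fun n : ℕ => ‖μ‖ * ((n + 1 : ℕ) : ℝ) ^ (μ.re - 1)) atTop (𝓝 0) := by
    have hpow : Tendsto (fun x : ℝ => x ^ (μ.re - 1)) atTop (𝓝 0) := by
      simpa using tendsto_rpow_neg_atTop (y := 1 - μ.re) (by linarith)
    simpa using (hpow.comp (tendsto_natCast_atTop_atTop.comp (tendsto_add_atTop_nat 1))).const_mul
      ‖μ‖
  exact memLip0N_of_tendsto (squeeze_zero (fun _ => norm_nonneg _) hstep hmajor)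

theorem Complex.re_lt_one_of_norm_natCast_cpow_lt {n : ℕ} (hn : 1 < n) {μ : ℂ}
    (h : ‖(n : ℂ) ^ μ‖ < n) : μ.re < 1 := by
  rw [norm_natCast_cpow_of_pos (by omega)] at h
  exact (Real.rpow_lt_rpow_left_iff (by exact_mod_cast hn : (1 : ℝ) < n)).1 (by simpa using h)

theorem Complex.exp_mul_log_natCast_add_one (μ : ℂ) (m : ℕ) :
    exp (μ * log ((m : ℂ) + 1)) = ((m + 1 : ℕ) : ℂ) ^ μ := by
  rw [Nat.cast_add_one, cpow_def_of_ne_zero (Nat.cast_add_one_ne_zero m), mul_comm]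

theorem eigenvalues_of_doubling_general (φ : ℕ → ℕ) (hφ : ∀ m : ℕ, φ m = 2 * m + 1)
    (lam : ℂ) (h2 : ‖lam‖ < 2)
    (μ : ℂ) (hμ : (2 : ℂ) ^ μ = lam) :
    MemLip0N (fun m : ℕ => Complex.exp (μ * Complex.log ((m : ℂ) + 1))) ∧
    (fun m : ℕ => Complex.exp (μ * Complex.log ((m : ℂ) + 1))) ≠ 0 ∧
    (fun m : ℕ => Complex.exp (μ * Complex.log ((m : ℂ) + 1))) ∘ φ =
      lam • fun m : ℕ => Complex.exp (μ * Complex.log ((m : ℂ) + 1)) := by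
  simp_rw [exp_mul_log_natCast_add_one]
  have hre : μ.re < 1 :=
    re_lt_one_of_norm_natCast_cpow_lt (n := 2) one_lt_two (by simpa [hμ] using h2)
  refine ⟨memLip0N_natCast_add_one_cpow hre, fun h => by simpa using congrFun h 0, ?_⟩
  funext m
  rw [Function.comp_apply, hφ, show 2 * m + 1 + 1 = 2 * (m + 1) by ring, Nat.cast_mul,
    natCast_mul_natCast_cpow, ← hμ, Nat.cast_ofNat, Pi.smul_apply, smul_eq_mul]

/-- For the tree `ℕ₀` rooted at `0` and `φ(m) = 2m + 1`, every `λ` with `0 < |λ| < 2` is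
an eigenvalue of `C_φ` on `Lip₀`, with eigenfunction `f(m) = (m+1)^μ` whenever `2^μ = λ`. -/
theorem eigenvalues_of_doubling (φ : ℕ → ℕ) (hφ : ∀ m : ℕ, φ m = 2 * m + 1)
    (lam : ℂ) (h0 : 0 < ‖lam‖) (h2 : ‖lam‖ < 2)
    (μ : ℂ) (hμ : (2 : ℂ) ^ μ = lam) :
    MemLip0N (fun m : ℕ => Complex.exp (μ * Complex.log ((m : ℂ) + 1))) ∧
    (fun m : ℕ => Complex.exp (μ * Complex.log ((m : ℂ) + 1))) ≠ 0 ∧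
    (fun m : ℕ => Complex.exp (μ * Complex.log ((m : ℂ) + 1))) ∘ φ =
      lam • fun m : ℕ => Complex.exp (μ * Complex.log ((m : ℂ) + 1)) :=
  eigenvalues_of_doubling_general φ hφ lam h2 μ hμ
end

section
/- If a self-map φ of T has no periodic points, then for every finite nonempty set K ⊆ T with |K| = n, the set of positive integers j with φʲ(K) ∩ K ≠ ∅ has at most n² − n elements; in particular there exists N such that φʲ(K) ∩ K = ∅ for all j ≥ N. -/
/-- If `φ` has no periodic points then, for every finite nonempty `K` with `|K| = n`,
the set of `j ≥ 1` with `φʲ(K) ∩ K ≠ ∅` has at most `n² - n` elements; in particular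
`φʲ(K) ∩ K = ∅` for all large `j`. -/
theorem run_away {α : Type*} (φ : α → α)
    (hnp : ∀ w : α, ∀ p : ℕ, 0 < p → φ^[p] w ≠ w)
    (K : Finset α) (hK : K.Nonempty) :
    {j : ℕ | 0 < j ∧ ∃ x ∈ K, φ^[j] x ∈ K}.Finite ∧
    {j : ℕ | 0 < j ∧ ∃ x ∈ K, φ^[j] x ∈ K}.ncard ≤ K.card ^ 2 - K.card ∧
    ∃ N : ℕ, ∀ j : ℕ, N ≤ j → ∀ x ∈ K, φ^[j] x ∉ K := by
  classical
  set S : Set ℕ := {j : ℕ | 0 < j ∧ ∃ x ∈ K, φ^[j] x ∈ K} with hS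
  set T : Finset (α × α) := (K ×ˢ K).filter (fun p => p.1 ≠ p.2) with hT
  -- choice of witness
  set f : ℕ → α × α := fun j =>
    if h : ∃ x ∈ K, φ^[j] x ∈ K then (h.choose, φ^[j] h.choose)
    else (hK.choose, hK.choose) with hf
  have hfS : ∀ j ∈ S, (f j).1 ∈ K ∧ (f j).2 ∈ K ∧ φ^[j] (f j).1 = (f j).2 := by
    intro j hj
    obtain ⟨hj0, hex⟩ := hj
    have hfj : f j = (hex.choose, φ^[j] hex.choose) := dif_pos hex
    rw [hfj]
    exact ⟨hex.choose_spec.1, hex.choose_spec.2, rfl⟩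
  -- key: no two distinct return times share a witness pair
  have key : ∀ j ∈ S, ∀ k ∈ S, j < k → f j ≠ f k := by
    intro j hj k hk hjk heq
    obtain ⟨h1, h2, h3⟩ := hfS j hj
    obtain ⟨h1', h2', h3'⟩ := hfS k hk
    have hx : (f j).1 = (f k).1 := by rw [heq]
    have hy : (f j).2 = (f k).2 := by rw [heq]
    have hper : φ^[k - j] ((f j).2) = (f j).2 := by
      have : φ^[k - j] (φ^[j] (f j).1) = φ^[k] (f j).1 := by
        rw [← Function.iterate_add_apply]
        congr 1
        omega
      rw [h3] at this
      rw [this, hx, h3', hy]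
    exact hnp _ (k - j) (by omega) hper
  have hinj : Set.InjOn f S := by
    intro j hj k hk heq
    rcases lt_trichotomy j k with h | h | h
    · exact absurd heq (key j hj k hk h)
    · exact h
    · exact absurd heq.symm (key k hk j hj h)
  have hmaps : Set.MapsTo f S (T : Set (α × α)) := by
    intro j hj
    obtain ⟨h1, h2, h3⟩ := hfS j hj
    simp only [hT, Finset.coe_filter, Set.mem_setOf_eq, Finset.mem_product]
    refine ⟨⟨h1, h2⟩, ?_⟩
    intro hdiag
    exact hnp (f j).1 j hj.1 (by rw [h3, hdiag])
  have hTfin : (T : Set (α × α)).Finite := T.finite_toSet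
  have hSfin : S.Finite := by
    have : (f '' S).Finite := hTfin.subset (Set.image_subset_iff.mpr hmaps)
    exact Set.Finite.of_finite_image this hinj
  -- cardinality of T
  have hdiagcard : ((K ×ˢ K).filter (fun p => p.1 = p.2)).card = K.card := by
    have : (K ×ˢ K).filter (fun p => p.1 = p.2) = K.image (fun x => (x, x)) := by
      ext p
      simp only [Finset.mem_filter, Finset.mem_product, Finset.mem_image]
      constructor
      · rintro ⟨⟨hp1, hp2⟩, heq⟩
        exact ⟨p.1, hp1, by rw [heq]; exact Prod.ext heq.symm rfl⟩
      · rintro ⟨x, hx, rfl⟩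
        exact ⟨⟨hx, hx⟩, rfl⟩
    rw [this, Finset.card_image_of_injective _ (fun a b h => (Prod.mk.injEq _ _ _ _ ▸ h).1)]
  have hTcard : T.card = K.card ^ 2 - K.card := by
    have h := Finset.card_filter_add_card_filter_not
      (s := K ×ˢ K) (p := fun p => p.1 = p.2)
    rw [Finset.card_product, hdiagcard] at h
    have : T.card = ((K ×ˢ K).filter (fun p => ¬ p.1 = p.2)).card := rfl
    rw [this]
    have := sq (K.card)
    omega
  have hcard : S.ncard ≤ K.card ^ 2 - K.card := by
    calc S.ncard = (f '' S).ncard := (Set.ncard_image_of_injOn hinj).symm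
    _ ≤ (T : Set (α × α)).ncard := Set.ncard_le_ncard (Set.image_subset_iff.mpr hmaps) hTfin
    _ = T.card := by rw [Set.ncard_coe_finset]
    _ = K.card ^ 2 - K.card := hTcard
  refine ⟨hSfin, hcard, ?_⟩
  obtain ⟨N, hN⟩ := hSfin.bddAbove
  refine ⟨N + 1, fun j hj x hx hxj => ?_⟩
  have : j ∈ S := ⟨by omega, x, hx, hxj⟩
  exact absurd (hN this) (by omega)
end

section
/- Let φ be an injective self-map of T with no periodic points. Then the following are equivalent: (1) for every cofinite S ⊆ T there is N ∈ ℕ with φᵏ(S) ⊆ S for all k ≥ N; (2) there is an increasing sequence (n_k) of nonnegative integers such that for every cofinite S ⊆ T there is N with φ^{n_k}(S) ⊆ S for all k ≥ N; (3) for every v ∈ T the set { n ∈ ℕ : φ⁻ⁿ({v}) ≠ ∅ } is finite. -/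
/-!
If every vertex has only finitely many preimage times, then past the largest preimage time of the
finitely many vertices outside a cofinite set `S`, no iterate can carry a point of `S` out of `S`.
Conversely, preimage times are downward closed, so if `v` has infinitely many of them it has all,
and some large `φ^[n k]` sends a point `x` to `v`; aperiodicity gives `x ≠ v`, so `φ^[n k]` does
not map `{v}ᶜ` into itself.
-/

namespace Function

variable {α : Type*} {f : α → α}

def RunsAwayAlong (f : α → α) (n : ℕ → ℕ) : Prop :=
  ∀ S : Set α, Sᶜ.Finite → ∃ N : ℕ, ∀ k : ℕ, N ≤ k → ∀ x ∈ S, f^[n k] x ∈ S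

def preimageTimes (f : α → α) (v : α) : Set ℕ :=
  {m : ℕ | 0 < m ∧ (f^[m] ⁻¹' {v}).Nonempty}

theorem nonempty_preimage_iterate_of_le {s : Set α} {m m' : ℕ} (hle : m' ≤ m)
    (h : (f^[m] ⁻¹' s).Nonempty) : (f^[m'] ⁻¹' s).Nonempty := by
  obtain ⟨x, hx⟩ := h
  refine ⟨f^[m - m'] x, ?_⟩
  rwa [Set.mem_preimage, ← iterate_add_apply, Nat.add_sub_cancel' hle]

theorem preimageTimes_eq_of_infinite {v : α} (h : (preimageTimes f v).Infinite) :
    preimageTimes f v = {m | 0 < m} := by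
  refine Set.Subset.antisymm (fun m hm => hm.1) fun m hm => ⟨hm, ?_⟩
  obtain ⟨m₀, hm₀, hlt⟩ := h.exists_gt m
  exact nonempty_preimage_iterate_of_le hlt.le hm₀.2

theorem RunsAwayAlong.finite_preimageTimes {n : ℕ → ℕ} (hf : RunsAwayAlong f n)
    (hn : StrictMono n) (haper : ∀ v : α, ∀ p : ℕ, 0 < p → f^[p] v ≠ v) (v : α) :
    (preimageTimes f v).Finite := by
  by_contra hinf
  obtain ⟨N, hN⟩ := hf {v}ᶜ (by simp)
  have hpos : 0 < n (N + 1) := (Nat.succ_pos N).trans_le hn.le_apply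
  have hmem : n (N + 1) ∈ preimageTimes f v := by
    rw [preimageTimes_eq_of_infinite hinf]
    exact hpos
  obtain ⟨x, hx : f^[n (N + 1)] x = v⟩ := hmem.2
  have hxv : x ≠ v := by
    rintro rfl
    exact haper x _ hpos hx
  exact hN (N + 1) N.le_succ x hxv hx

theorem runsAwayAlong_id_of_finite_preimageTimes (h : ∀ v : α, (preimageTimes f v).Finite) :
    RunsAwayAlong f id := by
  intro S hS
  obtain ⟨b, hb⟩ := (hS.biUnion fun v _ => h v).bddAbove
  refine ⟨b + 1, fun k hk x hx => ?_⟩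
  by_contra hout
  have : k ≤ b := hb (Set.mem_biUnion hout ⟨by omega, x, rfl⟩)
  omega

end Function

theorem run_away_tfae_general {V : Type*} (φ : V → V)
    (hnp : ∀ v : V, ∀ p : ℕ, 0 < p → φ^[p] v ≠ v) :
    ((∀ S : Set V, Sᶜ.Finite → ∃ N : ℕ, ∀ k : ℕ, N ≤ k → ∀ x ∈ S, φ^[k] x ∈ S) ↔
      (∃ n : ℕ → ℕ, StrictMono n ∧
        ∀ S : Set V, Sᶜ.Finite → ∃ N : ℕ, ∀ k : ℕ, N ≤ k → ∀ x ∈ S, φ^[n k] x ∈ S)) ∧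
    ((∃ n : ℕ → ℕ, StrictMono n ∧
        ∀ S : Set V, Sᶜ.Finite → ∃ N : ℕ, ∀ k : ℕ, N ≤ k → ∀ x ∈ S, φ^[n k] x ∈ S) ↔
      (∀ v : V, {m : ℕ | 0 < m ∧ (φ^[m] ⁻¹' {v}).Nonempty}.Finite)) := by
  have finite_of_runsAway :
      (∃ n, StrictMono n ∧ Function.RunsAwayAlong φ n) → ∀ v, (Function.preimageTimes φ v).Finite :=
    fun ⟨n, hn, hrun⟩ => hrun.finite_preimageTimes hn hnp
  have runsAway_of_finite :
      (∀ v, (Function.preimageTimes φ v).Finite) → Function.RunsAwayAlong φ id :=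
    Function.runsAwayAlong_id_of_finite_preimageTimes
  exact ⟨⟨fun h1 => ⟨id, strictMono_id, h1⟩, fun h2 => runsAway_of_finite (finite_of_runsAway h2)⟩,
    ⟨finite_of_runsAway, fun h3 => ⟨id, strictMono_id, runsAway_of_finite h3⟩⟩⟩

/-- For an injective `φ` with no periodic points, the three run-away conditions are
equivalent. -/
theorem run_away_tfae {V : Type*} (T : LipTree V) (φ : V → V)
    (hinj : Function.Injective φ)
    (hnp : ∀ v : V, ∀ p : ℕ, 0 < p → φ^[p] v ≠ v) :
    ((∀ S : Set V, Sᶜ.Finite → ∃ N : ℕ, ∀ k : ℕ, N ≤ k → ∀ x ∈ S, φ^[k] x ∈ S) ↔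
      (∃ n : ℕ → ℕ, StrictMono n ∧
        ∀ S : Set V, Sᶜ.Finite → ∃ N : ℕ, ∀ k : ℕ, N ≤ k → ∀ x ∈ S, φ^[n k] x ∈ S)) ∧
    ((∃ n : ℕ → ℕ, StrictMono n ∧
        ∀ S : Set V, Sᶜ.Finite → ∃ N : ℕ, ∀ k : ℕ, N ≤ k → ∀ x ∈ S, φ^[n k] x ∈ S) ↔
      (∀ v : V, {m : ℕ | 0 < m ∧ (φ^[m] ⁻¹' {v}).Nonempty}.Finite)) :=
  run_away_tfae_general φ hnp
end
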